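/- Let L be a first-order language, let M be an L-structure, and let ⫫ be a SWIR on M. If B ⫫_A C for finitely generated substructures A, B, C of M, then AB ⫫_A C and B ⫫_A AC. -/
import Mathlib


open FirstOrder

namespace Swir

variable {L : Language} {M : Type*} [L.Structure M]

/-- The automorphism `g` fixes the substructure `A` pointwise. -/
def Fixes (g : M ≃[L] M) (A : L.Substructure M) : Prop :=
  ∀ a ∈ A, g a = a

/-- The image `gA` of the substructure `A` under the automorphism `g`. -/
def aimg (g : M ≃[L] M) (A : L.Substructure M) : L.Substructure M :=
  A.map g.toHom

/-- `B ≡_A B'` : there is an automorphism of `M` fixing `A` pointwise and mapping `B` onto `B'`. -/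
def EquivOver (A B B' : L.Substructure M) : Prop :=
  ∃ g : M ≃[L] M, Fixes g A ∧ aimg g B = B'

/-- (Inv).  `Ind A B C` is read `B ⫫_A C`. -/
def InvAx (Ind : L.Substructure M → L.Substructure M → L.Substructure M → Prop) : Prop :=
  ∀ A B C : L.Substructure M, A.FG → B.FG → C.FG → ∀ g : M ≃[L] M,
    Ind A B C → Ind (aimg g A) (aimg g B) (aimg g C)

/-- (Ex-left) -/
def ExLeftAx (Ind : L.Substructure M → L.Substructure M → L.Substructure M → Prop) : Prop :=
  ∀ A B C : L.Substructure M, A.FG → B.FG → C.FG →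
    ∃ B' : L.Substructure M, EquivOver A B B' ∧ Ind A B' C

/-- (Ex-right) -/
def ExRightAx (Ind : L.Substructure M → L.Substructure M → L.Substructure M → Prop) : Prop :=
  ∀ A B C : L.Substructure M, A.FG → B.FG → C.FG →
    ∃ C' : L.Substructure M, EquivOver A C C' ∧ Ind A B C'

/-- (Sta-left) -/
def StaLeftAx (Ind : L.Substructure M → L.Substructure M → L.Substructure M → Prop) : Prop :=
  ∀ A B B' C : L.Substructure M, A.FG → B.FG → B'.FG → C.FG →
    Ind A B C → Ind A B' C →
    ∀ g : M ≃[L] M, Fixes g A → aimg g B = B' →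
      ∃ h : M ≃[L] M, Fixes h (A ⊔ C) ∧ ∀ b ∈ B, h b = g b

/-- (Sta-right) -/
def StaRightAx (Ind : L.Substructure M → L.Substructure M → L.Substructure M → Prop) : Prop :=
  ∀ A B C C' : L.Substructure M, A.FG → B.FG → C.FG → C'.FG →
    Ind A B C → Ind A B C' →
    ∀ g : M ≃[L] M, Fixes g A → aimg g C = C' →
      ∃ h : M ≃[L] M, Fixes h (A ⊔ B) ∧ ∀ c ∈ C, h c = g c

/-- (Mon-left) -/
def MonLeftAx (Ind : L.Substructure M → L.Substructure M → L.Substructure M → Prop) : Prop :=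
  ∀ A B C D : L.Substructure M, A.FG → B.FG → C.FG → D.FG →
    Ind A (B ⊔ D) C → Ind A B C ∧ Ind (A ⊔ B) D C

/-- (Mon-right) -/
def MonRightAx (Ind : L.Substructure M → L.Substructure M → L.Substructure M → Prop) : Prop :=
  ∀ A B C D : L.Substructure M, A.FG → B.FG → C.FG → D.FG →
    Ind A B (C ⊔ D) → Ind A B C ∧ Ind (A ⊔ C) B D

/-- (Tr-left) -/
def TrLeftAx (Ind : L.Substructure M → L.Substructure M → L.Substructure M → Prop) : Prop :=
  ∀ A B C D : L.Substructure M, A.FG → B.FG → C.FG → D.FG →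
    Ind A B C → Ind (A ⊔ B) D C → Ind A (B ⊔ D) C

/-- (Tr-right) -/
def TrRightAx (Ind : L.Substructure M → L.Substructure M → L.Substructure M → Prop) : Prop :=
  ∀ A B C D : L.Substructure M, A.FG → B.FG → C.FG → D.FG →
    Ind A B C → Ind (A ⊔ C) B D → Ind A B (C ⊔ D)

/-- A stationary weak independence relation (SWIR) on `M`. -/
structure IsSWIR (Ind : L.Substructure M → L.Substructure M → L.Substructure M → Prop) : Prop where
  inv : InvAx Ind
  exLeft : ExLeftAx Ind
  exRight : ExRightAx Ind
  staLeft : StaLeftAx Ind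
  staRight : StaRightAx Ind
  monLeft : MonLeftAx Ind
  monRight : MonRightAx Ind


lemma aimg_sup (g : M ≃[L] M) (A B : L.Substructure M) :
    aimg g (A ⊔ B) = aimg g A ⊔ aimg g B := Language.Substructure.map_sup A B g.toHom

lemma Fixes.aimg_eq {g : M ≃[L] M} {A : L.Substructure M} (h : Fixes g A) :
    aimg g A = A := by
  apply le_antisymm
  · rintro x ⟨a, ha, rfl⟩; simpa [h a ha] using ha
  · intro a ha; exact ⟨a, ha, h a ha⟩

lemma Fixes.symm {g : M ≃[L] M} {A : L.Substructure M} (h : Fixes g A) :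
    Fixes g.symm A := fun a ha => by
  conv_lhs => rw [← h a ha]
  exact g.symm_apply_apply a

lemma Fixes.mono {g : M ≃[L] M} {A B : L.Substructure M} (h : Fixes g A) (hBA : B ≤ A) :
    Fixes g B := fun a ha => h a (hBA ha)

lemma aimg_symm {g : M ≃[L] M} {A B : L.Substructure M} (h : aimg g A = B) :
    aimg g.symm B = A := by
  subst h
  ext x
  constructor
  · rintro ⟨y, ⟨a, ha, rfl⟩, rfl⟩; simpa using ha
  · intro hx; exact ⟨g x, ⟨x, hx, rfl⟩, g.symm_apply_apply x⟩

lemma aimg_congr {g h : M ≃[L] M} {A : L.Substructure M}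
    (he : ∀ a ∈ A, g a = h a) : aimg g A = aimg h A := by
  ext x
  constructor
  · rintro ⟨a, ha, rfl⟩; exact ⟨a, ha, (he a ha).symm⟩
  · rintro ⟨a, ha, rfl⟩; exact ⟨a, ha, he a ha⟩

lemma aimg_fg {g : M ≃[L] M} {A : L.Substructure M} (h : A.FG) : (aimg g A).FG :=
  h.map g.toHom

/-- if `⫫` is a SWIR on `M` and `B ⫫_A C`, then `AB ⫫_A C` and `B ⫫_A AC`. -/
theorem base_up
    (Ind : L.Substructure M → L.Substructure M → L.Substructure M → Prop)
    (hSwir : IsSWIR Ind) :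
    ∀ A B C : L.Substructure M, A.FG → B.FG → C.FG →
      Ind A B C → Ind A (A ⊔ B) C ∧ Ind A B (A ⊔ C) := by
  intro A B C hA hB hC hInd
  constructor
  · -- left: Ind A (A ⊔ B) C
    obtain ⟨B', ⟨g, hgA, hgAB⟩, hB'⟩ := hSwir.exLeft A (A ⊔ B) C hA (hA.sup hB) hC
    have hB0 : B' = A ⊔ aimg g B := by
      rw [← hgAB, aimg_sup, hgA.aimg_eq]
    subst hB0
    have hB0fg : (aimg g B).FG := aimg_fg hB
    have hIndB0 : Ind A (aimg g B) C := by
      have := (hSwir.monLeft A (aimg g B) C A hA hB0fg hC hA (by rwa [sup_comm])).1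
      exact this
    obtain ⟨h, hhAC, hhB⟩ := hSwir.staLeft A B (aimg g B) C hA hB hB0fg hC hInd hIndB0 g hgA rfl
    have hhA : aimg h.symm A = A := (Fixes.aimg_eq ((hhAC.mono le_sup_left).symm))
    have hhC : aimg h.symm C = C := (Fixes.aimg_eq ((hhAC.mono le_sup_right).symm))
    have hhB0 : aimg h.symm (aimg g B) = B := by
      have : aimg h B = aimg g B := aimg_congr hhB
      exact aimg_symm this
    have := hSwir.inv A (A ⊔ aimg g B) C hA (hA.sup hB0fg) hC h.symm hB'
    rwa [hhA, hhC, aimg_sup, hhA, hhB0] at this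
  · -- right: Ind A B (A ⊔ C)
    obtain ⟨C', ⟨g, hgA, hgAC⟩, hC'⟩ := hSwir.exRight A B (A ⊔ C) hA hB (hA.sup hC)
    have hC0 : C' = A ⊔ aimg g C := by
      rw [← hgAC, aimg_sup, hgA.aimg_eq]
    subst hC0
    have hC0fg : (aimg g C).FG := aimg_fg hC
    have hIndC0 : Ind A B (aimg g C) :=
      (hSwir.monRight A B (aimg g C) A hA hB hC0fg hA (by rwa [sup_comm])).1
    obtain ⟨h, hhAB, hhC⟩ := hSwir.staRight A B C (aimg g C) hA hB hC hC0fg hInd hIndC0 g hgA rfl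
    have hhA : aimg h.symm A = A := (Fixes.aimg_eq ((hhAB.mono le_sup_left).symm))
    have hhB : aimg h.symm B = B := (Fixes.aimg_eq ((hhAB.mono le_sup_right).symm))
    have hhC0 : aimg h.symm (aimg g C) = C := by
      have : aimg h C = aimg g C := aimg_congr hhC
      exact aimg_symm this
    have := hSwir.inv A B (A ⊔ aimg g C) hA hB (hA.sup hC0fg) h.symm hC'
    rwa [hhA, hhB, aimg_sup, hhA, hhC0] at this


end Swir
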